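/- Let N ≥ 4 and consider the N-qubit state ρ^{(D_2^N)} = a |D_2^N⟩⟨D_2^N| + (1−a) I_N / 2^N with 0 ≤ a ≤ 1. If a > C(N,2)(2N−5) / ( C(N,2)(2N−5) + 2^N ), then ρ^{(D_2^N)} is genuinely N-partite entangled, i.e. not 2-separable. -/

import Mathlib

open scoped BigOperators

noncomputable section

namespace Qubits

/-- The outer product `|ψ⟩⟨ψ|` of an `N`-qubit state vector, as a matrix in the
computational basis (indexed by configurations `Fin N → Fin 2`). -/
def outer {N : ℕ} (ψ : (Fin N → Fin 2) → ℂ) :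
    Matrix (Fin N → Fin 2) (Fin N → Fin 2) ℂ :=
  Matrix.vecMulVec ψ (star ψ)

/-- A pure `N`-qubit state is `k`-separable if `{1,…,N}` can be partitioned into `k`
(pairwise disjoint, nonempty) parts — the fibers of a surjection `P : Fin N → Fin k` —
such that `ψ` factorizes as a product of `k` functions, the `l`-th of which depends
only on the qubits in part `l`. -/
def kSepPure {N : ℕ} (k : ℕ) (ψ : (Fin N → Fin 2) → ℂ) : Prop :=
  ∃ P : Fin N → Fin k, Function.Surjective P ∧
    ∃ f : Fin k → ((Fin N → Fin 2) → ℂ),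
      (∀ l x y, (∀ i, P i = l → x i = y i) → f l x = f l y) ∧
      ∀ x, ψ x = ∏ l, f l x

/-- An `N`-qubit density matrix is `k`-separable if it is a convex combination of
projectors onto `k`-separable pure (unit) states, possibly separable with respect
to different partitions. -/
def kSep {N : ℕ} (k : ℕ) (ρ : Matrix (Fin N → Fin 2) (Fin N → Fin 2) ℂ) : Prop :=
  ∃ (n : ℕ) (p : Fin n → ℝ) (ψ : Fin n → (Fin N → Fin 2) → ℂ),
    (∀ s, 0 ≤ p s) ∧ (∑ s, p s = 1) ∧
    (∀ s, ∑ x, Complex.normSq (ψ s x) = 1) ∧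
    (∀ s, kSepPure k (ψ s)) ∧
    ρ = ∑ s, (p s : ℂ) • outer (ψ s)

/-- The `N`-qubit Dicke state with `m` excitations,
`|D_m^N⟩ = C(N,m)^{-1/2} Σ_{|S| = m} |e_S⟩`, as a vector of computational-basis
coefficients. -/
def dicke (N m : ℕ) : (Fin N → Fin 2) → ℂ :=
  fun x => if (Finset.univ.filter fun i => x i = 1).card = m
    then (((Real.sqrt (N.choose m))⁻¹ : ℝ) : ℂ) else 0

end Qubits

/-!
If a pure state `ψ` factorizes across a bipartition, exchanging the coordinates on one side
between two configurations preserves `ψ x * ψ y`. For sites `b`, `c` on different sides this gives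
`ψ(e_{ub}) ψ(e_{uc}) = ψ(e_{ubc}) ψ(e_u)`; for `b`, `c` on the same side we use AM-GM instead, and
a pair `{u, b}` occurs in at most `2N - 6` such terms. Summing over ordered triples of distinct
sites,
  `∑ Re ψ_{ub} conj ψ_{uc} ≤ (N - 3) ∑ |ψ_{ub}|² + ∑ |ψ_{ubc}| |ψ_u|`,
and by Cauchy-Schwarz over the mixture the same holds for every biseparable `ρ`, with `ρ`'s
entries in place of the products and `√ρ_{ubc,ubc} √ρ_{u,u}` in the last sum.
For the noisy Dicke state, with `v = (1 - a) / 2^N`, the left side is `N(N-1)(N-2) a / C(N,2)`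
and the right side `N(N-1) ((N-3)(a / C(N,2) + v) + (N-2) v)`, which forces
`a / C(N,2) ≤ (2N - 5) v`, i.e. `a` at most the threshold.
-/

open Finset

theorem Finset.sum_sum_erase_comm {α M : Type*} [DecidableEq α] [AddCommMonoid M] (s : Finset α)
    (f : α → α → M) : ∑ x ∈ s, ∑ y ∈ s.erase x, f x y = ∑ x ∈ s, ∑ y ∈ s.erase x, f y x :=
  sum_comm' fun x y => by simp only [mem_erase]; tauto

theorem Finset.sum_mul_mul_le_sqrt_mul_sqrt {ι : Type*} (s : Finset ι) {p : ι → ℝ}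
    (hp : ∀ i ∈ s, 0 ≤ p i) (f g : ι → ℝ) :
    ∑ i ∈ s, p i * (f i * g i) ≤ √(∑ i ∈ s, p i * f i ^ 2) * √(∑ i ∈ s, p i * g i ^ 2) := by
  have hsq : ∀ h : ι → ℝ, ∑ i ∈ s, (√(p i) * h i) ^ 2 = ∑ i ∈ s, p i * h i ^ 2 := fun h =>
    sum_congr rfl fun i hi => by rw [mul_pow, Real.sq_sqrt (hp i hi)]
  calc ∑ i ∈ s, p i * (f i * g i) = ∑ i ∈ s, (√(p i) * f i) * (√(p i) * g i) :=
        sum_congr rfl fun i hi => by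
          rw [mul_mul_mul_comm, Real.mul_self_sqrt (hp i hi)]
    _ ≤ _ := by
        rw [← hsq f, ← hsq g]
        exact Real.sum_mul_le_sqrt_mul_sqrt s _ _

theorem mul_eq_mul_exchange_of_factorization {ι κ α R : Type*} [Fintype κ] [DecidableEq κ]
    [CommMonoid R] {P : ι → κ} {f : κ → (ι → α) → R}
    {ψ : (ι → α) → R} (hloc : ∀ l x y, (∀ i, P i = l → x i = y i) → f l x = f l y)
    (hprod : ∀ x, ψ x = ∏ l, f l x) (l : κ) (x y : ι → α) :
    ψ x * ψ y = ψ (fun i => if P i = l then x i else y i) *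
      ψ (fun i => if P i = l then y i else x i) := by
  have merge : ∀ z w : ι → α, ∀ l', f l' (fun i => if P i = l then z i else w i) =
      if l' = l then f l' z else f l' w := by
    intro z w l'
    split_ifs with h
    · exact hloc l' _ _ fun i hi => if_pos (hi.trans h)
    · exact hloc l' _ _ fun i hi => if_neg (hi ▸ h)
  simp only [hprod, merge, ← prod_mul_distrib]
  refine prod_congr rfl fun l' _ => ?_
  split_ifs <;> rw [mul_comm]

namespace Qubits

variable {N : ℕ}

def basisConfig (W : Finset (Fin N)) : Fin N → Fin 2 := fun i => if i ∈ W then 1 else 0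

theorem filter_basisConfig_eq_one (W : Finset (Fin N)) :
    univ.filter (fun i => basisConfig W i = 1) = W := by
  ext i
  by_cases h : i ∈ W <;> simp [basisConfig, h]

theorem basisConfig_injective : Function.Injective (basisConfig (N := N)) := by
  intro W W' h
  rw [← filter_basisConfig_eq_one W, h, filter_basisConfig_eq_one]

theorem pair_mul_pair_eq_triple_mul_single_of_factorization {κ : Type*} [Fintype κ] [DecidableEq κ] {P : Fin N → κ}
    {f : κ → (Fin N → Fin 2) → ℂ} {ψ : (Fin N → Fin 2) → ℂ}
    (hloc : ∀ l x y, (∀ i, P i = l → x i = y i) → f l x = f l y)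
    (hprod : ∀ x, ψ x = ∏ l, f l x) {u b c : Fin N} (hbc : P b ≠ P c) :
    ψ (basisConfig {u, b}) * ψ (basisConfig {u, c}) =
      ψ (basisConfig {u, b, c}) * ψ (basisConfig {u}) := by
  rw [mul_eq_mul_exchange_of_factorization hloc hprod (P b)]
  congr 2 <;> funext i <;> by_cases hi : P i = P b <;>
    simp only [basisConfig, hi, if_true, if_false, mem_insert, mem_singleton] <;>
    grind

def sumPairs (F : Fin N → Fin N → ℝ) : ℝ := ∑ u, ∑ b ∈ univ.erase u, F u b

def sumTriples (F : Fin N → Fin N → Fin N → ℝ) : ℝ :=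
  ∑ u, ∑ b ∈ univ.erase u, ∑ c ∈ (univ.erase u).erase b, F u b c

theorem sumPairs_comm (F : Fin N → Fin N → ℝ) : sumPairs F = sumPairs fun u b => F b u :=
  sum_sum_erase_comm univ F

theorem sumTriples_comm (F : Fin N → Fin N → Fin N → ℝ) :
    sumTriples F = sumTriples fun u b c => F u c b :=
  sum_congr rfl fun u _ => sum_sum_erase_comm _ (F u)

theorem sumPairs_le_sumPairs {F G : Fin N → Fin N → ℝ} (h : ∀ u b, u ≠ b → F u b ≤ G u b) :
    sumPairs F ≤ sumPairs G :=
  sum_le_sum fun u _ => sum_le_sum fun b hb => h u b (ne_of_mem_erase hb).symm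

theorem sumTriples_le_sumTriples {F G : Fin N → Fin N → Fin N → ℝ}
    (h : ∀ u b c, u ≠ b → u ≠ c → b ≠ c → F u b c ≤ G u b c) :
    sumTriples F ≤ sumTriples G := by
  refine sum_le_sum fun u _ => sum_le_sum fun b hb => sum_le_sum fun c hc => ?_
  simp only [mem_erase] at hb hc
  exact h u b c (Ne.symm hb.1) (Ne.symm hc.2.1) (Ne.symm hc.1)

theorem sumPairs_eq {F : Fin N → Fin N → ℝ} {K : ℝ} (h : ∀ u b, u ≠ b → F u b = K) :
    sumPairs F = N * (N - 1) * K := by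
  have hu : ∀ u : Fin N, ∑ b ∈ univ.erase u, F u b = (N - 1) * K := fun u => by
    rw [sum_congr rfl fun b hb => h u b (ne_of_mem_erase hb).symm, sum_const,
      card_erase_of_mem (mem_univ u), card_univ, Fintype.card_fin, nsmul_eq_mul,
      Nat.cast_pred u.pos]
  simp only [sumPairs, hu, sum_const, card_univ, Fintype.card_fin, nsmul_eq_mul]
  ring

theorem sumTriples_eq {F : Fin N → Fin N → Fin N → ℝ} {K : ℝ}
    (h : ∀ u b c, u ≠ b → u ≠ c → b ≠ c → F u b c = K) :
    sumTriples F = N * (N - 1) * (N - 2) * K := by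
  have hub : ∀ u b : Fin N, u ≠ b →
      ∑ c ∈ (univ.erase u).erase b, F u b c = (N - 2) * K := fun u b hub => by
    have h2 : 2 ≤ N := by have := Fin.val_ne_of_ne hub; omega
    have hc : ∀ c ∈ (univ.erase u).erase b, F u b c = K := fun c hc => by
      simp only [mem_erase] at hc
      exact h u b c hub (Ne.symm hc.2.1) (Ne.symm hc.1)
    rw [sum_congr rfl hc, sum_const, card_erase_of_mem (mem_erase.2 ⟨hub.symm, mem_univ b⟩),
      card_erase_of_mem (mem_univ u), card_univ, Fintype.card_fin, nsmul_eq_mul,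
      Nat.sub_sub, Nat.cast_sub h2]
    norm_num
  rw [sumTriples, ← sumPairs, sumPairs_eq hub]
  ring

theorem sumPairs_add (F G : Fin N → Fin N → ℝ) :
    sumPairs (fun u b => F u b + G u b) = sumPairs F + sumPairs G := by
  simp only [sumPairs, sum_add_distrib]

theorem sumTriples_add (F G : Fin N → Fin N → Fin N → ℝ) :
    sumTriples (fun u b c => F u b c + G u b c) = sumTriples F + sumTriples G := by
  simp only [sumTriples, sum_add_distrib]

theorem sumPairs_mul_left (r : ℝ) (F : Fin N → Fin N → ℝ) :
    sumPairs (fun u b => r * F u b) = r * sumPairs F := by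
  simp only [sumPairs, mul_sum]

theorem sumTriples_mul_left (r : ℝ) (F : Fin N → Fin N → Fin N → ℝ) :
    sumTriples (fun u b c => r * F u b c) = r * sumTriples F := by
  simp only [sumTriples, mul_sum]

theorem sumPairs_sum {σ : Type*} (s : Finset σ) (F : σ → Fin N → Fin N → ℝ) :
    sumPairs (fun u b => ∑ i ∈ s, F i u b) = ∑ i ∈ s, sumPairs (F i) :=
  (sum_congr rfl fun _ _ => sum_comm).trans sum_comm

theorem sumTriples_sum {σ : Type*} (s : Finset σ) (F : σ → Fin N → Fin N → Fin N → ℝ) :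
    sumTriples (fun u b c => ∑ i ∈ s, F i u b c) = ∑ i ∈ s, sumTriples (F i) :=
  (sum_congr rfl fun _ _ => (sum_congr rfl fun _ _ => sum_comm).trans sum_comm).trans sum_comm

theorem card_filter_add_card_filter_add_six_le {κ : Type*} [DecidableEq κ] (hN : 4 ≤ N)
    {P : Fin N → κ} (hP : ∀ u, ∃ w, P w ≠ P u) {u b : Fin N} (hub : u ≠ b) :
    #{c ∈ (univ.erase u).erase b | P c = P b} + #{c ∈ (univ.erase b).erase u | P c = P u} + 6
      ≤ 2 * N := by
  rw [erase_right_comm (a := b)]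
  set S := (univ.erase u).erase b
  have hS : #S + 2 = N := by
    rw [card_erase_of_mem (mem_erase.2 ⟨hub.symm, mem_univ b⟩), card_erase_of_mem (mem_univ u),
      card_univ, Fintype.card_fin]
    have := Fin.val_ne_of_ne hub
    omega
  by_cases h : P u = P b
  · obtain ⟨w, hw⟩ := hP u
    have hwS : w ∈ S := by simp only [S, mem_erase]; grind
    have hle : #{c ∈ S | P c = P b} ≤ #(S.erase w) :=
      card_le_card fun c hc => by simp only [mem_filter, mem_erase] at hc ⊢; grind
    rw [card_erase_of_mem hwS] at hle
    rw [h]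
    omega
  · have hle : #{c ∈ S | P c = P u} ≤ #{c ∈ S | ¬P c = P b} :=
      card_le_card fun c hc => by simp only [mem_filter] at hc ⊢; grind
    have := card_filter_add_card_filter_not (s := S) (fun c => P c = P b)
    omega

theorem sumTriples_ite_samePart_le {κ : Type*} [DecidableEq κ] (hN : 4 ≤ N) {P : Fin N → κ}
    (hP : ∀ u, ∃ w, P w ≠ P u) {g : Fin N → Fin N → ℝ} (hg0 : ∀ u b, 0 ≤ g u b)
    (hg : ∀ u b, g u b = g b u) :
    sumTriples (fun u b c => if P b = P c then (g u b + g u c) / 2 else 0)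
      ≤ (N - 3) * sumPairs g := by
  set cnt : Fin N → Fin N → ℝ := fun u b => #{c ∈ (univ.erase u).erase b | P c = P b}
  have hsplit : sumTriples (fun u b c => if P b = P c then (g u b + g u c) / 2 else 0) =
      (sumTriples (fun u b c => if P c = P b then g u b else 0) +
        sumTriples (fun u b c => if P b = P c then g u c else 0)) / 2 := by
    simp only [sumTriples, ← sum_add_distrib, sum_div]
    congr! 3 with u _ b _ c _
    by_cases h : P b = P c <;> simp [h, eq_comm (a := P c)]
  have hcount : sumTriples (fun u b c => if P c = P b then g u b else 0) =
      sumPairs fun u b => cnt u b * g u b := by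
    simp only [sumTriples, sumPairs, ← sum_filter, sum_const, nsmul_eq_mul, cnt]
  have hpair : ∀ u b, u ≠ b → (cnt u b + cnt b u) * g u b ≤ (2 * N - 6) * g u b := by
    intro u b hub
    refine mul_le_mul_of_nonneg_right ?_ (hg0 u b)
    have : (cnt u b + cnt b u + 6 : ℝ) ≤ 2 * N := by
      simp only [cnt]
      exact_mod_cast card_filter_add_card_filter_add_six_le hN hP hub
    linarith
  have hsym : sumPairs (fun u b => cnt u b * g u b) = sumPairs fun u b => cnt b u * g u b := by
    rw [sumPairs_comm]
    simp only [hg]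
  calc sumTriples (fun u b c => if P b = P c then (g u b + g u c) / 2 else 0)
      = (sumPairs fun u b => (cnt u b + cnt b u) * g u b) / 2 := by
        rw [hsplit, sumTriples_comm fun u b c => if P b = P c then g u c else 0, hcount]
        simp only [add_mul, sumPairs_add]
        rw [← hsym]
    _ ≤ (sumPairs fun u b => (2 * N - 6) * g u b) / 2 := by
        gcongr
        exact sumPairs_le_sumPairs hpair
    _ = (N - 3) * sumPairs g := by
        rw [sumPairs_mul_left]
        ring

theorem sumTriples_re_le_of_kSepPure {k : ℕ} (hN : 4 ≤ N) (hk : 2 ≤ k)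
    {ψ : (Fin N → Fin 2) → ℂ} (h : kSepPure k ψ) :
    sumTriples (fun u b c => (ψ (basisConfig {u, b}) * star (ψ (basisConfig {u, c}))).re)
      ≤ (N - 3) * sumPairs (fun u b => ‖ψ (basisConfig {u, b})‖ ^ 2)
        + sumTriples fun u b c => ‖ψ (basisConfig {u, b, c})‖ * ‖ψ (basisConfig {u})‖ := by
  obtain ⟨P, hsurj, f, hloc, hprod⟩ := h
  have hP : ∀ u, ∃ w, P w ≠ P u := fun u => by
    have : Nontrivial (Fin k) := Fin.nontrivial_iff_two_le.2 hk
    obtain ⟨l, hl⟩ := exists_ne (P u)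
    obtain ⟨w, rfl⟩ := hsurj l
    exact ⟨w, hl⟩
  have hterm : ∀ u b c, (ψ (basisConfig {u, b}) * star (ψ (basisConfig {u, c}))).re
      ≤ (if P b = P c then
          (‖ψ (basisConfig {u, b})‖ ^ 2 + ‖ψ (basisConfig {u, c})‖ ^ 2) / 2 else 0)
        + ‖ψ (basisConfig {u, b, c})‖ * ‖ψ (basisConfig {u})‖ := fun u b c => by
    calc (ψ (basisConfig {u, b}) * star (ψ (basisConfig {u, c}))).re
        ≤ ‖ψ (basisConfig {u, b})‖ * ‖ψ (basisConfig {u, c})‖ := by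
          rw [← norm_star (ψ (basisConfig {u, c})), ← norm_mul]
          exact Complex.re_le_norm _
      _ ≤ _ := by
          split_ifs with hbc
          · nlinarith [two_mul_le_add_sq ‖ψ (basisConfig {u, b})‖ ‖ψ (basisConfig {u, c})‖,
              mul_nonneg (norm_nonneg (ψ (basisConfig {u, b, c})))
                (norm_nonneg (ψ (basisConfig {u})))]
          · rw [zero_add, ← norm_mul, ← norm_mul, pair_mul_pair_eq_triple_mul_single_of_factorization hloc hprod hbc]
  calc sumTriples (fun u b c => (ψ (basisConfig {u, b}) * star (ψ (basisConfig {u, c}))).re)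
      ≤ sumTriples fun u b c => (if P b = P c then
          (‖ψ (basisConfig {u, b})‖ ^ 2 + ‖ψ (basisConfig {u, c})‖ ^ 2) / 2 else 0)
        + ‖ψ (basisConfig {u, b, c})‖ * ‖ψ (basisConfig {u})‖ :=
        sumTriples_le_sumTriples fun u b c _ _ _ => hterm u b c
    _ ≤ _ := by
        rw [sumTriples_add]
        gcongr
        exact sumTriples_ite_samePart_le hN hP (fun _ _ => sq_nonneg _) fun u b => by rw [pair_comm]

theorem re_sum_smul_outer_apply {n : ℕ} (p : Fin n → ℝ) (ψ : Fin n → (Fin N → Fin 2) → ℂ)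
    (x y : Fin N → Fin 2) :
    ((∑ s, (p s : ℂ) • outer (ψ s)) x y).re = ∑ s, p s * (ψ s x * star (ψ s y)).re := by
  simp [Matrix.sum_apply, outer, Matrix.vecMulVec_apply, Complex.re_sum]

theorem re_mul_star_self (z : ℂ) : (z * star z).re = ‖z‖ ^ 2 := by
  rw [Complex.star_def, Complex.mul_conj']
  norm_cast

theorem sumTriples_re_le_of_kSep {k : ℕ} (hN : 4 ≤ N) (hk : 2 ≤ k)
    {ρ : Matrix (Fin N → Fin 2) (Fin N → Fin 2) ℂ} (h : kSep k ρ) :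
    sumTriples (fun u b c => (ρ (basisConfig {u, b}) (basisConfig {u, c})).re)
      ≤ (N - 3) * sumPairs (fun u b => (ρ (basisConfig {u, b}) (basisConfig {u, b})).re)
        + sumTriples fun u b c => √(ρ (basisConfig {u, b, c}) (basisConfig {u, b, c})).re *
            √(ρ (basisConfig {u}) (basisConfig {u})).re := by
  obtain ⟨n, p, ψ, hp, -, -, hsep, rfl⟩ := h
  simp only [re_sum_smul_outer_apply, re_mul_star_self]
  have hcs : ∀ u b c, ∑ s, p s * (‖ψ s (basisConfig {u, b, c})‖ * ‖ψ s (basisConfig {u})‖) ≤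
      √(∑ s, p s * ‖ψ s (basisConfig {u, b, c})‖ ^ 2) *
        √(∑ s, p s * ‖ψ s (basisConfig {u})‖ ^ 2) :=
    fun u b c => sum_mul_mul_le_sqrt_mul_sqrt _ (fun s _ => hp s) _ _
  calc sumTriples (fun u b c =>
        ∑ s, p s * (ψ s (basisConfig {u, b}) * star (ψ s (basisConfig {u, c}))).re)
      = ∑ s, p s * sumTriples (fun u b c =>
          (ψ s (basisConfig {u, b}) * star (ψ s (basisConfig {u, c}))).re) := by
        simp only [sumTriples_sum, sumTriples_mul_left]
    _ ≤ ∑ s, p s * ((N - 3) * sumPairs (fun u b => ‖ψ s (basisConfig {u, b})‖ ^ 2)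
        + sumTriples fun u b c => ‖ψ s (basisConfig {u, b, c})‖ * ‖ψ s (basisConfig {u})‖) :=
        sum_le_sum fun s _ =>
          mul_le_mul_of_nonneg_left (sumTriples_re_le_of_kSepPure hN hk (hsep s)) (hp s)
    _ = (N - 3) * sumPairs (fun u b => ∑ s, p s * ‖ψ s (basisConfig {u, b})‖ ^ 2)
        + sumTriples fun u b c =>
            ∑ s, p s * (‖ψ s (basisConfig {u, b, c})‖ * ‖ψ s (basisConfig {u})‖) := by
        rw [sumPairs_sum, sumTriples_sum, mul_sum, ← sum_add_distrib]
        refine sum_congr rfl fun s _ => ?_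
        rw [sumPairs_mul_left, sumTriples_mul_left]
        ring
    _ ≤ _ := by
        gcongr
        exact sumTriples_le_sumTriples fun u b c _ _ _ => hcs u b c

def noisyDicke (N m : ℕ) (a : ℝ) : Matrix (Fin N → Fin 2) (Fin N → Fin 2) ℂ :=
  (a : ℂ) • outer (dicke N m) + (((1 - a) / 2 ^ N : ℝ) : ℂ) • 1

theorem dicke_basisConfig (m : ℕ) (W : Finset (Fin N)) :
    dicke N m (basisConfig W) = ((if #W = m then (√(N.choose m))⁻¹ else 0 : ℝ) : ℂ) := by
  rw [dicke, filter_basisConfig_eq_one]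
  split_ifs <;> simp

theorem re_noisyDicke_basisConfig (m : ℕ) (a : ℝ) (W W' : Finset (Fin N)) :
    (noisyDicke N m a (basisConfig W) (basisConfig W')).re =
      (if #W = m ∧ #W' = m then a / N.choose m else 0) +
        if W = W' then (1 - a) / 2 ^ N else 0 := by
  have hC : (√(N.choose m : ℝ))⁻¹ * (√(N.choose m : ℝ))⁻¹ = (N.choose m : ℝ)⁻¹ := by
    rw [← mul_inv, Real.mul_self_sqrt (Nat.cast_nonneg _)]
  simp only [noisyDicke, outer, Matrix.add_apply, Matrix.smul_apply, Matrix.vecMulVec_apply,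
    Pi.star_apply, dicke_basisConfig, Matrix.one_apply, basisConfig_injective.eq_iff, smul_eq_mul,
    Complex.star_def, Complex.conj_ofReal, ← Complex.ofReal_mul, Complex.add_re,
    Complex.re_ofReal_mul, Complex.ofReal_re]
  split_ifs <;> simp_all [div_eq_mul_inv]

theorem re_noisyDicke_two_pair_pair (a : ℝ) {u b c : Fin N} (hub : u ≠ b) (huc : u ≠ c)
    (hbc : b ≠ c) :
    (noisyDicke N 2 a (basisConfig {u, b}) (basisConfig {u, c})).re = a / N.choose 2 := by
  have hne : ({u, b} : Finset (Fin N)) ≠ {u, c} := fun h => by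
    have : b ∈ ({u, c} : Finset (Fin N)) := h ▸ by simp
    simp [hub.symm, hbc] at this
  simp [re_noisyDicke_basisConfig, hub, huc, hne]

theorem re_noisyDicke_two_pair_self (a : ℝ) {u b : Fin N} (hub : u ≠ b) :
    (noisyDicke N 2 a (basisConfig {u, b}) (basisConfig {u, b})).re =
      a / N.choose 2 + (1 - a) / 2 ^ N := by
  simp [re_noisyDicke_basisConfig, card_pair hub]

theorem re_noisyDicke_two_self (a : ℝ) {W : Finset (Fin N)} (hW : #W ≠ 2) :
    (noisyDicke N 2 a (basisConfig W) (basisConfig W)).re = (1 - a) / 2 ^ N := by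
  simp [re_noisyDicke_basisConfig, hW]

theorem div_choose_two_le_of_kSep_noisyDicke {k : ℕ} (hN : 4 ≤ N) (hk : 2 ≤ k) {a : ℝ}
    (ha1 : a ≤ 1) (h : kSep k (noisyDicke N 2 a)) :
    a / N.choose 2 ≤ (2 * N - 5) * ((1 - a) / 2 ^ N) := by
  have hw := sumTriples_re_le_of_kSep hN hk h
  have hv : 0 ≤ (1 - a) / 2 ^ N := div_nonneg (sub_nonneg.2 ha1) (by positivity)
  rw [sumTriples_eq fun u b c hub huc hbc => re_noisyDicke_two_pair_pair a hub huc hbc,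
    sumPairs_eq fun u b hub => re_noisyDicke_two_pair_self a hub,
    sumTriples_eq fun u b c hub huc hbc => by
      rw [re_noisyDicke_two_self a (by rw [card_insert_of_notMem, card_pair hbc] <;> simp [*]),
        re_noisyDicke_two_self a (by rw [card_singleton]; omega),
        Real.mul_self_sqrt hv]] at hw
  have hN' : (4 : ℝ) ≤ N := by exact_mod_cast hN
  have hNN : (0 : ℝ) < N * (N - 1) := by nlinarith
  nlinarith

end Qubits

open Qubits in
theorem dicke2_noise_genuinely_entangled_general
    (N : ℕ) (hN : 4 ≤ N)
    (a : ℝ) (ha1 : a ≤ 1)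
    (ha : a > (N.choose 2 : ℝ) * (2 * (N : ℝ) - 5) /
        ((N.choose 2 : ℝ) * (2 * (N : ℝ) - 5) + 2 ^ N)) :
    ¬ kSep 2 ((a : ℂ) • outer (dicke N 2) +
        (((1 - a) / 2 ^ N : ℝ) : ℂ) • (1 : Matrix (Fin N → Fin 2) (Fin N → Fin 2) ℂ)) := by
  intro hsep
  have hN' : (4 : ℝ) ≤ N := by exact_mod_cast hN
  have hC : (0 : ℝ) < N.choose 2 := by exact_mod_cast Nat.choose_pos (by omega)
  have h2N : (0 : ℝ) < 2 ^ N := by positivity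
  have h := div_choose_two_le_of_kSep_noisyDicke hN le_rfl ha1 hsep
  rw [mul_div_assoc', div_le_div_iff₀ hC h2N] at h
  rw [gt_iff_lt, div_lt_iff₀ (add_pos (mul_pos hC (by linarith)) h2N)] at ha
  linarith

open Qubits in
/-- If `a > C(N,2)(2N−5) / (C(N,2)(2N−5) + 2^N)` then the mixture of the `N`-qubit
Dicke state `|D_2^N⟩` with white noise is genuinely `N`-partite entangled,
i.e. not 2-separable. -/
theorem dicke2_noise_genuinely_entangled
    (N : ℕ) (hN : 4 ≤ N)
    (a : ℝ) (ha0 : 0 ≤ a) (ha1 : a ≤ 1)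
    (ha : a > (N.choose 2 : ℝ) * (2 * (N : ℝ) - 5) /
        ((N.choose 2 : ℝ) * (2 * (N : ℝ) - 5) + 2 ^ N)) :
    ¬ kSep 2 ((a : ℂ) • outer (dicke N 2) +
        (((1 - a) / 2 ^ N : ℝ) : ℂ) • (1 : Matrix (Fin N → Fin 2) (Fin N → Fin 2) ℂ)) :=
  dicke2_noise_genuinely_entangled_general N hN a ha1 ha
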